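/- arXiv:2302.02189 — 3 statements merged into one kernel-verified Lean document; each statement's English description precedes it below -/
import Mathlib

section
/- Let S ⊂ ℝ² be a compact connected set and let B(x,r₁) ⊂ B(x,r₂) be concentric balls. If S intersects the circle ∂B(x,ρ) in at least 2 points for every ρ ∈ [r₁, r₂], then H¹(S ∩ (B(x,r₂) \ B(x,r₁))) ≥ 2(r₂ - r₁). -/
/-!
Cover the set `A` by countably many sets `tₙ` of diameter less than `δ`. The map `f = dist · x`
is 1-Lipschitz, so each image `f (tₙ ∩ A)` has length at most `diam tₙ`, and integrating the
function counting how many images contain a level `ρ` bounds `∑ diam tₙ` from below. Every level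
`ρ ∈ [r₁, r₂]` lies in one image, and in two distinct images as soon as its fibre contains two
points at distance `≥ δ`; letting `δ → 0` yields the second sheet over all of `[r₁, r₂]`.
-/

open Set Metric MeasureTheory
open scoped ENNReal

theorem measure_add_measure_le_tsum_of_covers {α : Type*} [MeasurableSpace α] (μ : Measure α)
    {F E : Set α} {J : ℕ → Set α} (hF : F ⊆ ⋃ n, J n)
    (hE : ∀ y ∈ E, ∃ n m, n ≠ m ∧ y ∈ J n ∧ y ∈ J m) :
    μ F + μ E ≤ ∑' n, μ (J n) := by
  -- Counting over measurable hulls makes `c` measurable; then `F`, `E` and `Jₙ` need not be.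
  set c : α → ℝ≥0∞ := fun y ↦ ∑' n, (toMeasurable μ (J n)).indicator 1 y
  have hc : Measurable c :=
    Measurable.tsum fun n ↦ measurable_one.indicator (measurableSet_toMeasurable μ _)
  have hJ : ∀ n, ∀ y ∈ J n, (toMeasurable μ (J n)).indicator 1 y = (1 : ℝ≥0∞) := fun n y hy ↦
    indicator_of_mem (subset_toMeasurable μ _ hy) _
  have hF₁ : F ⊆ {y | 1 ≤ c y} := fun y hy ↦ by
    obtain ⟨n, hn⟩ := mem_iUnion.1 (hF hy)
    exact (hJ n y hn).symm.trans_le (ENNReal.le_tsum n)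
  have hE₂ : E ⊆ {y | 2 ≤ c y} := fun y hy ↦ by
    obtain ⟨n, m, hnm, hn, hm⟩ := hE y hy
    calc (2 : ℝ≥0∞) = ∑ i ∈ {n, m}, (toMeasurable μ (J i)).indicator 1 y := by
          rw [Finset.sum_pair hnm, hJ n y hn, hJ m y hm, one_add_one_eq_two]
      _ ≤ c y := ENNReal.sum_le_tsum _
  have hcount : ∀ y, {y | 1 ≤ c y}.indicator 1 y + {y | 2 ≤ c y}.indicator 1 y ≤ c y := by
    intro y
    by_cases h₂ : 2 ≤ c y
    · have h₁ : 1 ≤ c y := one_le_two.trans h₂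
      simp [h₁, h₂, one_add_one_eq_two]
    · by_cases h₁ : 1 ≤ c y <;> simp [h₁, h₂]
  calc μ F + μ E ≤ μ {y | 1 ≤ c y} + μ {y | 2 ≤ c y} :=
        add_le_add (measure_mono hF₁) (measure_mono hE₂)
    _ = ∫⁻ y, {y | 1 ≤ c y}.indicator 1 y + {y | 2 ≤ c y}.indicator 1 y ∂μ := by
        rw [lintegral_add_left (measurable_one.indicator (measurableSet_le measurable_const hc)),
          lintegral_indicator_one (measurableSet_le measurable_const hc),
          lintegral_indicator_one (measurableSet_le measurable_const hc)]
    _ ≤ ∫⁻ y, c y ∂μ := lintegral_mono hcount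
    _ = ∑' n, μ (J n) := by
        rw [lintegral_tsum fun n ↦
          (measurable_one.indicator (measurableSet_toMeasurable μ _)).aemeasurable]
        simp [lintegral_indicator_one (measurableSet_toMeasurable μ _), measure_toMeasurable]

theorem LipschitzWith.volume_image_le_ediam {X : Type*} [PseudoEMetricSpace X] {f : X → ℝ}
    (hf : LipschitzWith 1 f) (s : Set X) : volume (f '' s) ≤ ediam s :=
  (Real.volume_le_diam _).trans (by simpa using hf.ediam_image_le s)

variable {X : Type*} [EMetricSpace X] [MeasurableSpace X] [BorelSpace X]

theorem volume_add_volume_le_hausdorffMeasure_of_le_edist {f : X → ℝ} (hf : LipschitzWith 1 f)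
    {A : Set X} {F E : Set ℝ} {δ : ℝ≥0∞} (hδ : 0 < δ) (hF : F ⊆ f '' A)
    (hE : ∀ y ∈ E, ∃ p ∈ A, ∃ q ∈ A, f p = y ∧ f q = y ∧ δ ≤ edist p q) :
    volume F + volume E ≤ μH[1] A := by
  obtain ⟨r, hr, hrδ⟩ := exists_between hδ
  rw [Measure.hausdorffMeasure_apply]
  refine le_iSup₂_of_le r hr <| le_iInf fun t ↦ le_iInf fun hAt ↦ le_iInf fun htr ↦ ?_
  have hcover : ∀ p ∈ A, ∃ n, p ∈ t n := fun p hp ↦ mem_iUnion.1 (hAt hp)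
  calc volume F + volume E ≤ ∑' n, volume (f '' (t n ∩ A)) := by
        refine measure_add_measure_le_tsum_of_covers _ ?_ ?_
        · intro y hy
          obtain ⟨p, hp, rfl⟩ := hF hy
          obtain ⟨n, hn⟩ := hcover p hp
          exact mem_iUnion.2 ⟨n, p, ⟨hn, hp⟩, rfl⟩
        · intro y hy
          obtain ⟨p, hp, q, hq, rfl, hqp, hpq⟩ := hE y hy
          obtain ⟨n, hn⟩ := hcover p hp
          obtain ⟨m, hm⟩ := hcover q hq
          refine ⟨n, m, ?_, ⟨p, ⟨hn, hp⟩, rfl⟩, ⟨q, ⟨hm, hq⟩, hqp⟩⟩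
          rintro rfl
          exact (hrδ.trans_le hpq).not_ge ((edist_le_ediam_of_mem hn hm).trans (htr n))
    _ ≤ ∑' n, ⨆ _ : (t n).Nonempty, ediam (t n) ^ (1 : ℝ) := by
        refine ENNReal.tsum_le_tsum fun n ↦ (hf.volume_image_le_ediam _).trans ?_
        rcases (t n).eq_empty_or_nonempty with h | h
        · simp [h]
        · simpa [h] using ediam_mono inter_subset_left

theorem volume_add_volume_le_hausdorffMeasure {f : X → ℝ} (hf : LipschitzWith 1 f)
    {A : Set X} {F E : Set ℝ} (hF : F ⊆ f '' A)
    (hE : ∀ y ∈ E, ∃ p ∈ A, ∃ q ∈ A, p ≠ q ∧ f p = y ∧ f q = y) :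
    volume F + volume E ≤ μH[1] A := by
  set L : ℕ → Set ℝ := fun n ↦
    {y | ∃ p ∈ A, ∃ q ∈ A, f p = y ∧ f q = y ∧ (n : ℝ≥0∞)⁻¹ ≤ edist p q}
  have hL : Monotone L := fun n m hnm y ⟨p, hp, q, hq, hpy, hqy, hpq⟩ ↦
    ⟨p, hp, q, hq, hpy, hqy, (ENNReal.inv_le_inv.2 (by exact_mod_cast hnm)).trans hpq⟩
  have hEL : E ⊆ ⋃ n, L n := fun y hy ↦ by
    obtain ⟨p, hp, q, hq, hne, hpy, hqy⟩ := hE y hy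
    obtain ⟨n, hn⟩ := ENNReal.exists_inv_nat_lt (edist_pos.2 hne).ne'
    exact mem_iUnion.2 ⟨n, p, hp, q, hq, hpy, hqy, hn.le⟩
  calc volume F + volume E ≤ volume F + ⨆ n, volume (L n) :=
        add_le_add le_rfl ((measure_mono hEL).trans_eq hL.measure_iUnion)
    _ = ⨆ n, (volume F + volume (L n)) := ENNReal.add_iSup _
    _ ≤ μH[1] A := iSup_le fun n ↦ volume_add_volume_le_hausdorffMeasure_of_le_edist hf
        (ENNReal.inv_pos.2 (ENNReal.natCast_ne_top n)) hF fun _ hy ↦ hy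

theorem stmt_9_general (S : Set (EuclideanSpace ℝ (Fin 2)))
    (x : EuclideanSpace ℝ (Fin 2)) (r₁ r₂ : ℝ)
    (h2 : ∀ ρ ∈ Set.Icc r₁ r₂, ∃ p q, p ≠ q ∧
      p ∈ S ∩ Metric.sphere x ρ ∧ q ∈ S ∩ Metric.sphere x ρ) :
    ENNReal.ofReal (2 * (r₂ - r₁)) ≤
      μH[1] (S ∩ (Metric.closedBall x r₂ \ Metric.ball x r₁)) := by
  set A := S ∩ (closedBall x r₂ \ ball x r₁)
  have hsheets : ∀ ρ ∈ Icc r₁ r₂, ∃ p ∈ A, ∃ q ∈ A, p ≠ q ∧ dist p x = ρ ∧ dist q x = ρ := by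
    rintro ρ ⟨h₁, h₂⟩
    obtain ⟨p, q, hpq, ⟨hpS, hp⟩, ⟨hqS, hq⟩⟩ := h2 ρ ⟨h₁, h₂⟩
    rw [mem_sphere] at hp hq
    exact ⟨p, ⟨hpS, mem_closedBall.2 (hp ▸ h₂), fun h ↦ (mem_ball.1 h).not_ge (hp ▸ h₁)⟩,
      q, ⟨hqS, mem_closedBall.2 (hq ▸ h₂), fun h ↦ (mem_ball.1 h).not_ge (hq ▸ h₁)⟩, hpq, hp, hq⟩
  have hone : Icc r₁ r₂ ⊆ (dist · x) '' A := fun ρ hρ ↦ by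
    obtain ⟨p, hp, -, -, -, hpρ, -⟩ := hsheets ρ hρ
    exact ⟨p, hp, hpρ⟩
  have := volume_add_volume_le_hausdorffMeasure (LipschitzWith.dist_left x) hone hsheets
  rwa [ENNReal.ofReal_mul zero_le_two, ← Real.volume_Icc, ENNReal.ofReal_ofNat, two_mul]

/-- Co-area estimate: if a compact connected planar set meets every circle of
radius `ρ ∈ [r₁, r₂]` about `x` in at least two points, then its `H¹` measure
inside the annulus is at least `2 (r₂ - r₁)`. -/
theorem stmt_9 (S : Set (EuclideanSpace ℝ (Fin 2))) (hS : IsCompact S)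
    (hconn : IsConnected S) (x : EuclideanSpace ℝ (Fin 2)) (r₁ r₂ : ℝ)
    (hr : r₁ ≤ r₂)
    (h2 : ∀ ρ ∈ Set.Icc r₁ r₂, ∃ p q, p ≠ q ∧
      p ∈ S ∩ Metric.sphere x ρ ∧ q ∈ S ∩ Metric.sphere x ρ) :
    ENNReal.ofReal (2 * (r₂ - r₁)) ≤
      μH[1] (S ∩ (Metric.closedBall x r₂ \ Metric.ball x r₁)) :=
  stmt_9_general S x r₁ r₂ h2
end

section
/- Let Y, B, C be three points in ℝ² such that all angles of the triangle YBC are less than 2π/3, and let T be the Fermat–Torricelli point of the triangle. Then for any point P in the plane, |PY| + |PB| + |PC| ≥ |TY| + |TB| + |TC|, with equality iff P = T. -/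
open Real EuclideanGeometry RealInnerProductSpace

section aux

variable {V : Type*} [NormedAddCommGroup V] [InnerProductSpace ℝ V]

/-- From an angle condition to a normalized inner product. -/
lemma fermat_inner_aux {a b : V} (ha : a ≠ 0) (hb : b ≠ 0)
    (h : InnerProductGeometry.angle a b = 2 * Real.pi / 3) :
    ⟪‖a‖⁻¹ • a, ‖b‖⁻¹ • b⟫ = -(1/2) := by
  have hcos : Real.cos (2 * Real.pi / 3) = -(1/2) := by
    have h2 : 2 * Real.pi / 3 = Real.pi - Real.pi / 3 := by ring
    rw [h2, Real.cos_pi_sub, Real.cos_pi_div_three]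
  have hca := InnerProductGeometry.cos_angle a b
  rw [h, hcos] at hca
  have hna : ‖a‖ ≠ 0 := norm_ne_zero_iff.mpr ha
  have hnb : ‖b‖ ≠ 0 := norm_ne_zero_iff.mpr hb
  rw [real_inner_smul_left, real_inner_smul_right]
  field_simp at hca ⊢
  linarith [hca]

lemma fermat_key_ineq {u : V} (hu : ‖u‖ = 1) (y t p : V)
    (hy : y - t = ‖y - t‖ • u) :
    dist t y + ⟪t - p, u⟫ ≤ dist p y := by
  have h1 : ⟪y - p, u⟫ ≤ ‖y - p‖ := by
    calc ⟪y - p, u⟫ ≤ ‖y - p‖ * ‖u‖ := real_inner_le_norm _ _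
      _ = ‖y - p‖ := by rw [hu, mul_one]
  have h2 : (y - p : V) = (y - t) + (t - p) := by abel
  have h3 : ⟪y - t, u⟫ = ‖y - t‖ := by
    nth_rewrite 1 [hy]
    rw [real_inner_smul_left, real_inner_self_eq_norm_sq, hu]
    ring
  have h4 : dist t y = ‖y - t‖ := by rw [dist_eq_norm, norm_sub_rev]
  have h5 : dist p y = ‖y - p‖ := by rw [dist_eq_norm, norm_sub_rev]
  have h1' : ⟪y - t, u⟫ + ⟪t - p, u⟫ ≤ ‖y - p‖ := by
    rw [← inner_add_left, ← h2]; exact h1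
  rw [h4, h5]
  linarith

lemma fermat_eq_aux {u : V} (hu : ‖u‖ = 1) (y t p : V)
    (hy : y - t = ‖y - t‖ • u)
    (heq : dist t y + ⟪t - p, u⟫ = dist p y) :
    y - p = ‖y - p‖ • u := by
  have h2 : (y - p : V) = (y - t) + (t - p) := by abel
  have h3 : ⟪y - t, u⟫ = ‖y - t‖ := by
    nth_rewrite 1 [hy]
    rw [real_inner_smul_left, real_inner_self_eq_norm_sq, hu]
    ring
  have h4 : dist t y = ‖y - t‖ := by rw [dist_eq_norm, norm_sub_rev]
  have h5 : dist p y = ‖y - p‖ := by rw [dist_eq_norm, norm_sub_rev]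
  have h6 : ⟪y - p, u⟫ = ‖y - p‖ * ‖u‖ := by
    have hsplit : ⟪y - p, u⟫ = ⟪y - t, u⟫ + ⟪t - p, u⟫ := by
      rw [← inner_add_left, ← h2]
    rw [h4, h5] at heq
    rw [hu, mul_one, hsplit, h3]
    exact heq
  have h7 := inner_eq_norm_mul_iff_real.mp h6
  rw [hu, one_smul] at h7
  exact h7

end aux

/-- The Fermat–Torricelli point (the point at which the three segments to the
vertices make pairwise angles `2π/3`) of a triangle with all angles `< 2π/3`
uniquely minimizes the sum of distances to the three vertices. -/
theorem stmt_10 (Y B C T : EuclideanSpace ℝ (Fin 2))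
    (haff : AffineIndependent ℝ ![Y, B, C])
    (hY : ∠ B Y C < 2 * Real.pi / 3) (hB : ∠ Y B C < 2 * Real.pi / 3)
    (hC : ∠ Y C B < 2 * Real.pi / 3)
    (hT1 : ∠ Y T B = 2 * Real.pi / 3) (hT2 : ∠ B T C = 2 * Real.pi / 3)
    (hT3 : ∠ C T Y = 2 * Real.pi / 3) :
    ∀ P : EuclideanSpace ℝ (Fin 2),
      dist P Y + dist P B + dist P C ≥ dist T Y + dist T B + dist T C ∧
      (dist P Y + dist P B + dist P C = dist T Y + dist T B + dist T C ↔ P = T) := by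
  intro P
  have hpi : (0:ℝ) < Real.pi := Real.pi_pos
  have h1 : InnerProductGeometry.angle (Y - T) (B - T) = 2 * Real.pi / 3 := by
    rw [EuclideanGeometry.angle, vsub_eq_sub, vsub_eq_sub] at hT1; exact hT1
  have h2 : InnerProductGeometry.angle (B - T) (C - T) = 2 * Real.pi / 3 := by
    rw [EuclideanGeometry.angle, vsub_eq_sub, vsub_eq_sub] at hT2; exact hT2
  have h3 : InnerProductGeometry.angle (C - T) (Y - T) = 2 * Real.pi / 3 := by
    rw [EuclideanGeometry.angle, vsub_eq_sub, vsub_eq_sub] at hT3; exact hT3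
  have ha : (Y - T : EuclideanSpace ℝ (Fin 2)) ≠ 0 := by
    intro h
    rw [h, InnerProductGeometry.angle_zero_left] at h1
    linarith
  have hb : (B - T : EuclideanSpace ℝ (Fin 2)) ≠ 0 := by
    intro h
    rw [h, InnerProductGeometry.angle_zero_right] at h1
    linarith
  have hc : (C - T : EuclideanSpace ℝ (Fin 2)) ≠ 0 := by
    intro h
    rw [h, InnerProductGeometry.angle_zero_left] at h3
    linarith
  set u : EuclideanSpace ℝ (Fin 2) := ‖Y - T‖⁻¹ • (Y - T) with hu_def
  set v : EuclideanSpace ℝ (Fin 2) := ‖B - T‖⁻¹ • (B - T) with hv_def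
  set w : EuclideanSpace ℝ (Fin 2) := ‖C - T‖⁻¹ • (C - T) with hw_def
  have hna : ‖(Y - T : EuclideanSpace ℝ (Fin 2))‖ ≠ 0 := norm_ne_zero_iff.mpr ha
  have hnb : ‖(B - T : EuclideanSpace ℝ (Fin 2))‖ ≠ 0 := norm_ne_zero_iff.mpr hb
  have hnc : ‖(C - T : EuclideanSpace ℝ (Fin 2))‖ ≠ 0 := norm_ne_zero_iff.mpr hc
  have hu : ‖u‖ = 1 := by
    rw [hu_def, norm_smul, norm_inv, norm_norm, inv_mul_cancel₀ hna]
  have hv : ‖v‖ = 1 := by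
    rw [hv_def, norm_smul, norm_inv, norm_norm, inv_mul_cancel₀ hnb]
  have hw : ‖w‖ = 1 := by
    rw [hw_def, norm_smul, norm_inv, norm_norm, inv_mul_cancel₀ hnc]
  have huv : ⟪u, v⟫ = -(1/2) := fermat_inner_aux ha hb h1
  have hvw : ⟪v, w⟫ = -(1/2) := fermat_inner_aux hb hc h2
  have hwu : ⟪w, u⟫ = -(1/2) := fermat_inner_aux hc ha h3
  have hvu : ⟪v, u⟫ = -(1/2) := by rw [real_inner_comm]; exact huv
  have hwv : ⟪w, v⟫ = -(1/2) := by rw [real_inner_comm]; exact hvw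
  have huw : ⟪u, w⟫ = -(1/2) := by rw [real_inner_comm]; exact hwu
  have huu : ⟪u, u⟫ = 1 := by
    rw [real_inner_self_eq_norm_sq, hu]; ring
  have hvv : ⟪v, v⟫ = 1 := by
    rw [real_inner_self_eq_norm_sq, hv]; ring
  have hww : ⟪w, w⟫ = 1 := by
    rw [real_inner_self_eq_norm_sq, hw]; ring
  have hsum : u + v + w = 0 := by
    have hz : ⟪u + v + w, u + v + w⟫ = 0 := by
      simp only [inner_add_left, inner_add_right, huu, hvv, hww, huv, hvu, hvw, hwv, hwu, huw]
      ring
    exact inner_self_eq_zero.mp hz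
  have hyu : (Y - T : EuclideanSpace ℝ (Fin 2)) = ‖Y - T‖ • u := by
    rw [hu_def, smul_smul, mul_inv_cancel₀ hna, one_smul]
  have hbv : (B - T : EuclideanSpace ℝ (Fin 2)) = ‖B - T‖ • v := by
    rw [hv_def, smul_smul, mul_inv_cancel₀ hnb, one_smul]
  have hcw : (C - T : EuclideanSpace ℝ (Fin 2)) = ‖C - T‖ • w := by
    rw [hw_def, smul_smul, mul_inv_cancel₀ hnc, one_smul]
  have k1 := fermat_key_ineq hu Y T P hyu
  have k2 := fermat_key_ineq hv B T P hbv
  have k3 := fermat_key_ineq hw C T P hcw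
  have hinz : ⟪(T - P : EuclideanSpace ℝ (Fin 2)), u⟫ + ⟪(T - P : EuclideanSpace ℝ (Fin 2)), v⟫
      + ⟪(T - P : EuclideanSpace ℝ (Fin 2)), w⟫ = 0 := by
    rw [← inner_add_right, ← inner_add_right, hsum, inner_zero_right]
  have hge : dist P Y + dist P B + dist P C ≥ dist T Y + dist T B + dist T C := by
    linarith
  refine ⟨hge, ?_, ?_⟩
  · intro heq
    have e1 : dist T Y + ⟪(T - P : EuclideanSpace ℝ (Fin 2)), u⟫ = dist P Y := by linarith
    have e2 : dist T B + ⟪(T - P : EuclideanSpace ℝ (Fin 2)), v⟫ = dist P B := by linarith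
    have f1 := fermat_eq_aux hu Y T P hyu e1
    have f2 := fermat_eq_aux hv B T P hbv e2
    -- P - T = (Y - T) - (Y - P) = (‖Y-T‖ - ‖Y-P‖) • u
    have g1 : (P - T : EuclideanSpace ℝ (Fin 2)) = (‖(Y - T : EuclideanSpace ℝ (Fin 2))‖ - ‖(Y - P : EuclideanSpace ℝ (Fin 2))‖) • u := by
      rw [sub_smul, ← hyu, ← f1]; abel
    have g2 : (P - T : EuclideanSpace ℝ (Fin 2)) = (‖(B - T : EuclideanSpace ℝ (Fin 2))‖ - ‖(B - P : EuclideanSpace ℝ (Fin 2))‖) • v := by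
      rw [sub_smul, ← hbv, ← f2]; abel
    set α := ‖(Y - T : EuclideanSpace ℝ (Fin 2))‖ - ‖(Y - P : EuclideanSpace ℝ (Fin 2))‖
    set β := ‖(B - T : EuclideanSpace ℝ (Fin 2))‖ - ‖(B - P : EuclideanSpace ℝ (Fin 2))‖
    have i1 : ⟪(P - T : EuclideanSpace ℝ (Fin 2)), u⟫ = α := by
      rw [g1, real_inner_smul_left, huu, mul_one]
    have i2 : ⟪(P - T : EuclideanSpace ℝ (Fin 2)), u⟫ = β * (-(1/2)) := by
      rw [g2, real_inner_smul_left, hvu]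
    have i3 : ⟪(P - T : EuclideanSpace ℝ (Fin 2)), v⟫ = α * (-(1/2)) := by
      rw [g1, real_inner_smul_left, huv]
    have i4 : ⟪(P - T : EuclideanSpace ℝ (Fin 2)), v⟫ = β := by
      rw [g2, real_inner_smul_left, hvv, mul_one]
    have hα : α = 0 := by
      have hab : α = β * (-(1/2)) := by rw [← i1, i2]
      have hba : β = α * (-(1/2)) := by rw [← i4, i3]
      linarith [hab, hba]
    have : (P - T : EuclideanSpace ℝ (Fin 2)) = 0 := by rw [g1, hα, zero_smul]
    exact sub_eq_zero.mp this
  · intro h; subst h; rfl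
end

section
/- Let Y, B, C ∈ ℝ² with all angles of triangle YBC less than 2π/3 and let T be its Fermat–Torricelli point. Then any compact connected set S ⊂ ℝ² containing Y, B and C satisfies H¹(S) ≥ |TY| + |TB| + |TC|; i.e., the regular tripod [TY] ∪ [TB] ∪ [TC] is a Steiner tree for {Y, B, C}. -/
open Real EuclideanGeometry MeasureTheory Set Metric
open scoped ENNReal RealInnerProductSpace

/-!
Let `Γ ⊆ S` be a minimal continuum through `Y` and `B`, let `Δ ⊆ S` be a minimal continuum
joining `C` to `Γ` (both exist by Zorn, since nested intersections of continua are continua), and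
let `p ∈ Γ ∩ Δ`. For `ε > 0`, minimality makes the components through `Y` and `B` of
`Γ \ ball p ε` and the component through `C` of `Δ \ ball p ε` pairwise disjoint, and by boundary
bumping each of them reaches the sphere around `p`, so it has `H¹` measure at least the distance
from its vertex to `p`, minus `ε`. Hence `H¹(S) ≥ |pY| + |pB| + |pC|`. The angle condition at `T`
says that the unit vectors from `T` towards the vertices sum to zero, and projecting onto them
shows that `T` minimises `|pY| + |pB| + |pC|`.
-/

section Topology

variable {X : Type*} [TopologicalSpace X]

theorem IsCompact.connectedComponentIn {F : Set X} (hF : IsCompact F) (x : X) :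
    IsCompact (connectedComponentIn F x) := by
  by_cases hx : x ∈ F
  · have := isCompact_iff_compactSpace.mp hF
    rw [connectedComponentIn_eq_image hx]
    exact isClosed_connectedComponent.isCompact.image continuous_subtype_val
  · rw [connectedComponentIn_eq_empty hx]
    exact isCompact_empty

theorem disjoint_connectedComponentIn_of_notMem {F : Set X} {x y : X}
    (h : y ∉ connectedComponentIn F x) :
    Disjoint (connectedComponentIn F y) (connectedComponentIn F x) := by
  refine Set.disjoint_left.mpr fun z hzy hzx => h ?_
  rw [connectedComponentIn_eq hzx, ← connectedComponentIn_eq hzy]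
  exact mem_connectedComponentIn (connectedComponentIn_nonempty_iff.mp ⟨z, hzy⟩)

variable [T2Space X]

theorem exists_isClopen_disjoint_of_disjoint_connectedComponent [CompactSpace X] {x : X}
    {E : Set X} (hE : IsClosed E) (h : Disjoint (connectedComponent x) E) :
    ∃ U, IsClopen U ∧ x ∈ U ∧ Disjoint U E := by
  rw [connectedComponent_eq_iInter_isClopen, disjoint_iff_inter_eq_empty, inter_comm] at h
  obtain ⟨t, ht⟩ := hE.isCompact.elim_finite_subfamily_closed _ (fun U => U.2.1.isClosed) h
  refine ⟨⋂ U ∈ t, U, isClopen_biInter_finset fun U _ => U.2.1,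
    mem_iInter₂.mpr fun U _ => U.2.2, ?_⟩
  rwa [disjoint_iff_inter_eq_empty, inter_comm]

/-- The boundary bumping theorem. -/
theorem connectedComponentIn_inter_closure_diff_nonempty {K F : Set X} {x : X}
    (hK : IsPreconnected K) (hF : IsCompact F) (hFK : F ⊆ K) (hKF : (K \ F).Nonempty)
    (hx : x ∈ F) : (connectedComponentIn F x ∩ closure (K \ F)).Nonempty := by
  rw [← not_disjoint_iff_nonempty_inter, connectedComponentIn_eq_image hx]
  intro h
  have := isCompact_iff_compactSpace.mp hF
  obtain ⟨U, hU, hxU, hUE⟩ := exists_isClopen_disjoint_of_disjoint_connectedComponent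
    (isClosed_closure.preimage continuous_subtype_val)
    (disjoint_image_iff Subtype.val_injective |>.mp (h.mono_right (image_preimage_subset _ _)))
  have hUc : IsClosed (Subtype.val '' U) :=
    (hU.isClosed.isCompact.image continuous_subtype_val).isClosed
  have hUcc : IsClosed (closure (K \ F) ∪ Subtype.val '' Uᶜ) :=
    isClosed_closure.union (hU.compl.isClosed.isCompact.image continuous_subtype_val).isClosed
  obtain ⟨z, -, ⟨w, hwU, rfl⟩, hw⟩ := isPreconnected_closed_iff.mp hK _ _ hUc hUcc
    (fun z hzK => by
      by_cases hzF : z ∈ F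
      · by_cases hzU : (⟨z, hzF⟩ : F) ∈ U
        exacts [Or.inl ⟨_, hzU, rfl⟩, Or.inr (Or.inr ⟨_, hzU, rfl⟩)]
      · exact Or.inr (Or.inl (subset_closure ⟨hzK, hzF⟩)))
    ⟨x, hFK hx, _, hxU, rfl⟩ (hKF.mono fun z hz => ⟨hz.1, Or.inl (subset_closure hz)⟩)
  rcases hw with hw | ⟨w', hw', hww'⟩
  · exact disjoint_left.mp hUE hwU hw
  · exact hw' (Subtype.val_injective hww' ▸ hwU)

theorem isPreconnected_sInter_of_directedOn {c : Set (Set X)} (hc : DirectedOn (· ⊇ ·) c)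
    (hne : c.Nonempty) (hcpt : ∀ K ∈ c, IsCompact K) (hconn : ∀ K ∈ c, IsPreconnected K) :
    IsPreconnected (⋂₀ c) := by
  obtain ⟨K₀, hK₀⟩ := hne
  have : Nonempty c := ⟨⟨K₀, hK₀⟩⟩
  have hA : IsCompact (⋂₀ c) := (hcpt K₀ hK₀).of_isClosed_subset
    (isClosed_sInter fun K hK => (hcpt K hK).isClosed) (sInter_subset_of_mem hK₀)
  rw [isPreconnected_closed_iff]
  intro t t' ht ht' hcover ⟨x, hxA, hxt⟩ ⟨y, hyA, hyt'⟩
  by_contra hdisj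
  obtain ⟨U, V, hU, hV, htU, htV, hUV⟩ :=
    SeparatedNhds.of_isCompact_isCompact (hA.inter_right ht) (hA.inter_right ht')
      (disjoint_iff_inter_eq_empty.mpr <| by
        rw [inter_inter_inter_comm, inter_self]; exact not_nonempty_iff_eq_empty.mp hdisj)
  obtain ⟨⟨K, hK⟩, hKUV⟩ := exists_subset_nhds_of_isCompact (V := fun K : c => (K : Set X))
    hc.directed_val (fun K => hcpt K K.2) fun z hz => (hU.union hV).mem_nhds <| by
      rw [← sInter_eq_iInter] at hz
      exact (hcover hz).imp (fun h => htU ⟨hz, h⟩) (fun h => htV ⟨hz, h⟩)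
  obtain ⟨z, -, hzU, hzV⟩ := hconn K hK U V hU hV hKUV
    ⟨x, sInter_subset_of_mem hK hxA, htU ⟨hxA, hxt⟩⟩
    ⟨y, sInter_subset_of_mem hK hyA, htV ⟨hyA, hyt'⟩⟩
  exact disjoint_left.mp hUV hzU hzV

def IsContinuumJoining (S : Set X) (x : X) (A K : Set X) : Prop :=
  K ⊆ S ∧ IsCompact K ∧ IsPreconnected K ∧ x ∈ K ∧ (K ∩ A).Nonempty

theorem exists_minimal_isContinuumJoining {S A : Set X} {x : X} (hA : IsClosed A)
    (hS : IsContinuumJoining S x A S) : ∃ K, Minimal (IsContinuumJoining S x A) K := by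
  refine (zorn_superset_nonempty {K | IsContinuumJoining S x A K} ?_ S hS).imp fun K hK => hK.2
  intro c hc hchain ⟨K₀, hK₀⟩
  have hdir : DirectedOn (· ⊇ ·) c := fun a ha b hb => (hchain.total ha hb).elim
    (fun h => ⟨a, ha, subset_rfl, h⟩) (fun h => ⟨b, hb, h, subset_rfl⟩)
  have : Nonempty c := ⟨⟨K₀, hK₀⟩⟩
  refine ⟨⋂₀ c, ⟨(sInter_subset_of_mem hK₀).trans (hc hK₀).1, ?_, ?_, ?_, ?_⟩,
    fun K hK => sInter_subset_of_mem hK⟩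
  · exact (hc hK₀).2.1.of_isClosed_subset (isClosed_sInter fun K hK => (hc hK).2.1.isClosed)
      (sInter_subset_of_mem hK₀)
  · exact isPreconnected_sInter_of_directedOn hdir ⟨K₀, hK₀⟩ (fun K hK => (hc hK).2.1)
      (fun K hK => (hc hK).2.2.1)
  · exact mem_sInter.mpr fun K hK => (hc hK).2.2.2.1
  · obtain ⟨z, hz⟩ := IsCompact.nonempty_iInter_of_directed_nonempty_isCompact_isClosed
      (fun K : c => (K : Set X) ∩ A)
      (fun K L => (hdir.directed_val K L).imp fun _ h =>
        ⟨inter_subset_inter_left A h.1, inter_subset_inter_left A h.2⟩)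
      (fun K => (hc K.2).2.2.2.2) (fun K => (hc K.2).2.1.inter_right hA)
      (fun K => (hc K.2).2.1.isClosed.inter hA)
    exact ⟨z, mem_sInter.mpr fun K hK => (mem_iInter.mp hz ⟨K, hK⟩).1,
      (mem_iInter.mp hz ⟨K₀, hK₀⟩).2⟩

end Topology

theorem ENNReal.ofReal_le_of_forall_pos_ofReal_sub_le {a : ℝ} {m : ℝ≥0∞}
    (h : ∀ ε > 0, ENNReal.ofReal (a - ε) ≤ m) : ENNReal.ofReal a ≤ m := by
  refine ENNReal.le_of_forall_pos_le_add fun ε hε _ => ?_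
  calc ENNReal.ofReal a = ENNReal.ofReal ((a - ε) + ε) := by rw [sub_add_cancel]
    _ ≤ ENNReal.ofReal (a - ε) + ENNReal.ofReal ε := ENNReal.ofReal_add_le
    _ ≤ m + ε := by rw [ENNReal.ofReal_coe_nnreal]; gcongr; exact h ε hε

section Metric

variable {X : Type*} [MetricSpace X]

theorem Minimal.disjoint_connectedComponentIn_diff_ball {S A K : Set X} {x p : X}
    (hK : Minimal (IsContinuumJoining S x A) K) (hp : p ∈ K) {ε : ℝ} (hε : 0 < ε) :
    Disjoint (connectedComponentIn (K \ ball p ε) x) A := by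
  rw [disjoint_iff_inter_eq_empty, ← not_nonempty_iff_eq_empty]
  intro hDA
  have hxF : x ∈ K \ ball p ε :=
    connectedComponentIn_nonempty_iff.mp (hDA.mono inter_subset_left)
  have hDK : connectedComponentIn (K \ ball p ε) x ⊆ K :=
    (connectedComponentIn_subset _ _).trans sdiff_subset
  have hKD := hK.2 ⟨hDK.trans hK.1.1, (hK.1.2.1.diff isOpen_ball).connectedComponentIn x,
    isPreconnected_connectedComponentIn, mem_connectedComponentIn hxF, hDA⟩ hDK
  exact (connectedComponentIn_subset _ _ (hKD hp)).2 (mem_ball_self hε)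

variable [MeasurableSpace X] [BorelSpace X]

theorem IsPreconnected.ofReal_dist_le_hausdorffMeasure {A : Set X} (hA : IsPreconnected A)
    {x y : X} (hx : x ∈ A) (hy : y ∈ A) : ENNReal.ofReal (dist x y) ≤ μH[1] A := by
  have hlip : LipschitzWith 1 (dist · x) := LipschitzWith.dist_left x
  have hIcc : Icc 0 (dist y x) ⊆ (dist · x) '' A :=
    (hA.image _ hlip.continuous.continuousOn).Icc_subset ⟨x, hx, dist_self x⟩ ⟨y, hy, rfl⟩
  calc ENNReal.ofReal (dist x y) = μH[1] (Icc 0 (dist y x)) := by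
        rw [hausdorffMeasure_real, Real.volume_Icc, sub_zero, dist_comm]
    _ ≤ μH[1] ((dist · x) '' A) := measure_mono hIcc
    _ ≤ μH[1] A := by simpa using hlip.hausdorffMeasure_image_le zero_le_one A

theorem ofReal_dist_sub_le_hausdorffMeasure_connectedComponentIn {K : Set X}
    (hK : IsCompact K) (hKc : IsPreconnected K) {x p : X} (hx : x ∈ K) (hp : p ∈ K) {ε : ℝ}
    (hε : 0 < ε) :
    ENNReal.ofReal (dist p x - ε) ≤ μH[1] (connectedComponentIn (K \ ball p ε) x) := by
  by_cases hxp : dist p x < ε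
  · rw [ENNReal.ofReal_of_nonpos (by linarith)]
    exact zero_le
  have hxF : x ∈ K \ ball p ε := ⟨hx, by rwa [mem_ball, dist_comm]⟩
  obtain ⟨q, hq, hqK⟩ := connectedComponentIn_inter_closure_diff_nonempty hKc
    (hK.diff isOpen_ball) sdiff_subset ⟨p, hp, fun h => h.2 (mem_ball_self hε)⟩ hxF
  rw [Set.sdiff_sdiff_right_self] at hqK
  have hqp : dist q p ≤ ε := closure_ball_subset_closedBall (closure_mono inter_subset_right hqK)
  calc ENNReal.ofReal (dist p x - ε) ≤ ENNReal.ofReal (dist x q) := by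
        gcongr; linarith [dist_triangle p q x, dist_comm p q, dist_comm q x]
    _ ≤ _ := isPreconnected_connectedComponentIn.ofReal_dist_le_hausdorffMeasure
        (mem_connectedComponentIn hxF) hq

theorem ofReal_dist_sub_add_add_le_hausdorffMeasure {S Γ Δ : Set X} {Y B C p : X}
    (hΓ : Minimal (IsContinuumJoining S B {Y}) Γ) (hΔ : Minimal (IsContinuumJoining S C Γ) Δ)
    (hpΓ : p ∈ Γ) (hpΔ : p ∈ Δ) {ε : ℝ} (hε : 0 < ε) :
    ENNReal.ofReal (dist p Y - ε) + ENNReal.ofReal (dist p B - ε) + ENNReal.ofReal (dist p C - ε)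
      ≤ μH[1] S := by
  obtain ⟨hΓS, hΓcpt, hΓc, hBΓ, hYΓ⟩ := hΓ.1
  rw [inter_singleton_nonempty] at hYΓ
  obtain ⟨hΔS, hΔcpt, hΔc, hCΔ, -⟩ := hΔ.1
  set DY := connectedComponentIn (Γ \ ball p ε) Y
  set DB := connectedComponentIn (Γ \ ball p ε) B
  set DC := connectedComponentIn (Δ \ ball p ε) C
  have hDΓ : ∀ x, connectedComponentIn (Γ \ ball p ε) x ⊆ Γ :=
    fun x => (connectedComponentIn_subset _ _).trans sdiff_subset
  have hDY : Disjoint DY DB := disjoint_connectedComponentIn_of_notMem fun h =>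
    disjoint_left.mp (hΓ.disjoint_connectedComponentIn_diff_ball hpΓ hε) h rfl
  have hDC : Disjoint (DY ∪ DB) DC := Disjoint.mono_left (union_subset (hDΓ _) (hDΓ _))
    (hΔ.disjoint_connectedComponentIn_diff_ball hpΔ hε).symm
  have hcpt : ∀ K x, IsCompact K → IsCompact (connectedComponentIn (K \ ball p ε) x) :=
    fun K x hK => (hK.diff isOpen_ball).connectedComponentIn x
  calc _ ≤ μH[1] DY + μH[1] DB + μH[1] DC := by
        gcongr
        · exact ofReal_dist_sub_le_hausdorffMeasure_connectedComponentIn hΓcpt hΓc hYΓ hpΓ hε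
        · exact ofReal_dist_sub_le_hausdorffMeasure_connectedComponentIn hΓcpt hΓc hBΓ hpΓ hε
        · exact ofReal_dist_sub_le_hausdorffMeasure_connectedComponentIn hΔcpt hΔc hCΔ hpΔ hε
    _ = μH[1] (DY ∪ DB ∪ DC) := by
        rw [measure_union hDC (hcpt Δ C hΔcpt).measurableSet,
          measure_union hDY (hcpt Γ B hΓcpt).measurableSet]
    _ ≤ μH[1] S := measure_mono <| union_subset (union_subset ((hDΓ Y).trans hΓS)
        ((hDΓ B).trans hΓS)) (((connectedComponentIn_subset _ _).trans sdiff_subset).trans hΔS)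

theorem exists_ofReal_dist_add_add_le_hausdorffMeasure {S : Set X} (hS : IsCompact S)
    (hSc : IsPreconnected S) {Y B C : X} (hY : Y ∈ S) (hB : B ∈ S) (hC : C ∈ S) :
    ∃ p, ENNReal.ofReal (dist p Y + dist p B + dist p C) ≤ μH[1] S := by
  obtain ⟨Γ, hΓ⟩ := exists_minimal_isContinuumJoining isClosed_singleton
    ⟨subset_rfl, hS, hSc, hB, inter_singleton_nonempty.mpr hY⟩
  obtain ⟨Δ, hΔ⟩ := exists_minimal_isContinuumJoining hΓ.1.2.1.isClosed
    ⟨subset_rfl, hS, hSc, hC, Y, hY, inter_singleton_nonempty.mp hΓ.1.2.2.2.2⟩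
  obtain ⟨p, hpΔ, hpΓ⟩ := hΔ.1.2.2.2.2
  refine ⟨p, ENNReal.ofReal_le_of_forall_pos_ofReal_sub_le fun ε hε => ?_⟩
  calc ENNReal.ofReal (dist p Y + dist p B + dist p C - ε)
      = ENNReal.ofReal ((dist p Y - ε / 3) + (dist p B - ε / 3) + (dist p C - ε / 3)) := by
        ring_nf
    _ ≤ ENNReal.ofReal (dist p Y - ε / 3) + ENNReal.ofReal (dist p B - ε / 3)
        + ENNReal.ofReal (dist p C - ε / 3) :=
        ENNReal.ofReal_add_le.trans (add_le_add_left ENNReal.ofReal_add_le _)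
    _ ≤ μH[1] S := ofReal_dist_sub_add_add_le_hausdorffMeasure hΓ hΔ hpΓ hpΔ (by positivity)

end Metric

section InnerProduct

open InnerProductGeometry

variable {E : Type*} [NormedAddCommGroup E] [InnerProductSpace ℝ E]

theorem dist_sub_inner_le (T V p : E) :
    dist T V - ⟪‖V - T‖⁻¹ • (V - T), p - T⟫ ≤ dist p V := by
  set w := ‖V - T‖⁻¹ • (V - T)
  have hw : ‖w‖ ≤ 1 := by
    rw [norm_smul, norm_inv, norm_norm]
    exact inv_mul_le_one
  have hwV : ⟪w, V - T⟫ = dist T V := by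
    rw [real_inner_smul_left, real_inner_self_eq_norm_mul_norm, ← mul_assoc, inv_mul_mul_self,
      dist_comm, dist_eq_norm]
  calc dist T V - ⟪w, p - T⟫ = ⟪w, V - p⟫ := by
        rw [← hwV, ← inner_sub_right, sub_sub_sub_cancel_right]
    _ ≤ ‖w‖ * ‖V - p‖ := real_inner_le_norm _ _
    _ ≤ dist p V := by
        rw [dist_comm, dist_eq_norm]
        exact mul_le_of_le_one_left (norm_nonneg _) hw

theorem sum_dist_le_sum_dist_of_sum_smul_eq_zero {ι : Type*} (s : Finset ι) (V : ι → E)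
    {T : E} (h : ∑ i ∈ s, ‖V i - T‖⁻¹ • (V i - T) = 0) (p : E) :
    ∑ i ∈ s, dist T (V i) ≤ ∑ i ∈ s, dist p (V i) :=
  calc ∑ i ∈ s, dist T (V i)
      = ∑ i ∈ s, (dist T (V i) - ⟪‖V i - T‖⁻¹ • (V i - T), p - T⟫) := by
        rw [Finset.sum_sub_distrib, ← sum_inner, h, inner_zero_left, sub_zero]
    _ ≤ ∑ i ∈ s, dist p (V i) := Finset.sum_le_sum fun i _ => dist_sub_inner_le T (V i) p

theorem InnerProductGeometry.smul_add_smul_add_smul_eq_zero_of_angle_eq {u v w : E}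
    (huv : angle u v = 2 * π / 3) (hvw : angle v w = 2 * π / 3) (hwu : angle w u = 2 * π / 3) :
    ‖u‖⁻¹ • u + ‖v‖⁻¹ • v + ‖w‖⁻¹ • w = 0 := by
  have hne : ∀ {x y : E}, angle x y = 2 * π / 3 → x ≠ 0 := fun h hx => by
    rw [hx, angle_zero_left] at h
    linarith [pi_pos]
  have hnorm : ∀ {x : E}, x ≠ 0 → ‖‖x‖⁻¹ • x‖ = 1 := norm_smul_inv_norm
  have hinner : ∀ {x y : E}, angle x y = 2 * π / 3 → ⟪‖x‖⁻¹ • x, ‖y‖⁻¹ • y⟫ = -(1 / 2) := by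
    intro x y h
    have hy : y ≠ 0 := hne (by rwa [angle_comm])
    rw [← cos_angle_mul_norm_mul_norm, angle_smul_left_of_pos _ _ (by simpa using hne h),
      angle_smul_right_of_pos _ _ (by simpa using hy), h, hnorm (hne h), hnorm hy,
      show 2 * π / 3 = π - π / 3 by ring, cos_pi_sub, cos_pi_div_three]
    ring
  have hiuv := hinner huv
  have hivw := hinner hvw
  have hiuw : ⟪‖u‖⁻¹ • u, ‖w‖⁻¹ • w⟫ = -(1 / 2) := by rw [real_inner_comm]; exact hinner hwu
  have hsq : ‖‖u‖⁻¹ • u + ‖v‖⁻¹ • v + ‖w‖⁻¹ • w‖ ^ 2 = 0 := by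
    rw [norm_add_sq_real, norm_add_sq_real, inner_add_left, hnorm (hne huv), hnorm (hne hvw),
      hnorm (hne hwu), hiuv, hivw, hiuw]
    norm_num
  exact norm_eq_zero.mp (pow_eq_zero_iff two_ne_zero |>.mp hsq)

end InnerProduct

theorem stmt_11_general (Y B C T : EuclideanSpace ℝ (Fin 2))
    (hT1 : ∠ Y T B = 2 * Real.pi / 3) (hT2 : ∠ B T C = 2 * Real.pi / 3)
    (hT3 : ∠ C T Y = 2 * Real.pi / 3)
    (S : Set (EuclideanSpace ℝ (Fin 2))) (hS : IsCompact S) (hconn : IsConnected S)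
    (hYS : Y ∈ S) (hBS : B ∈ S) (hCS : C ∈ S) :
    ENNReal.ofReal (dist T Y + dist T B + dist T C) ≤ μH[1] S := by
  obtain ⟨p, hp⟩ :=
    exists_ofReal_dist_add_add_le_hausdorffMeasure hS hconn.isPreconnected hYS hBS hCS
  refine le_trans (ENNReal.ofReal_le_ofReal ?_) hp
  have hT := InnerProductGeometry.smul_add_smul_add_smul_eq_zero_of_angle_eq hT1 hT2 hT3
  simpa [Fin.sum_univ_three, add_assoc] using
    sum_dist_le_sum_dist_of_sum_smul_eq_zero Finset.univ ![Y, B, C] (T := T)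
      (by simpa [Fin.sum_univ_three] using hT) p

/-- Any compact connected set containing the vertices of a triangle with all
angles `< 2π/3` has `H¹` measure at least the length of the regular tripod
centered at the Fermat–Torricelli point `T`. -/
theorem stmt_11 (Y B C T : EuclideanSpace ℝ (Fin 2))
    (haff : AffineIndependent ℝ ![Y, B, C])
    (hY : ∠ B Y C < 2 * Real.pi / 3) (hB : ∠ Y B C < 2 * Real.pi / 3)
    (hC : ∠ Y C B < 2 * Real.pi / 3)
    (hT1 : ∠ Y T B = 2 * Real.pi / 3) (hT2 : ∠ B T C = 2 * Real.pi / 3)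
    (hT3 : ∠ C T Y = 2 * Real.pi / 3)
    (S : Set (EuclideanSpace ℝ (Fin 2))) (hS : IsCompact S) (hconn : IsConnected S)
    (hYS : Y ∈ S) (hBS : B ∈ S) (hCS : C ∈ S) :
    ENNReal.ofReal (dist T Y + dist T B + dist T C) ≤ μH[1] S :=
  stmt_11_general Y B C T hT1 hT2 hT3 S hS hconn hYS hBS hCS
end
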